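/- arXiv:1703.00642 — 2 statements merged into one kernel-verified Lean document; each statement's English description precedes it below -/
import Mathlib

section
/- Let G be a finite group, A a G-interior 𝒪-algebra, P a p-subgroup of G, and K := {φ_x : x ∈ N_G(P)} ≤ Aut(P); identify K with N_G(P)/C_G(P). Then the map A(P) ⊗_{kC_G(P)} kN_G(P) → N̄_A^K(P) sending Br_P(a) ⊗ x to the class of a·x in A(Δ_{φ_x}(P)) (for a ∈ A^P, x ∈ N_G(P)) is a well-defined isomorphism of N_G(P)/C_G(P)-graded k-algebras, where the source carries the multiplication (Br_P(a) ⊗ x)(Br_P(b) ⊗ y) := Br_P(a·(x·b·x^{-1})) ⊗ xy and the grading by the cosets of C_G(P) in N_G(P). -/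
open scoped Classical DirectSum

noncomputable abbrev subQuot {R M : Type*} [Ring R] [AddCommGroup M] [Module R M]
    (S T : Submodule R M) : Type _ := ↥S ⧸ T.comap S.subtype

section Common

variable (𝒪 : Type*) [CommRing 𝒪]
variable {A : Type*} [Ring A] [Algebra 𝒪 A]
variable {P : Type*} [Group P]

/-- `A^{Δ_φ(Q)}`; for `φ = id` this is the set of `Q`-fixed points of `A`. -/
def intFixed (σ : P →* Aˣ) (φ : P ≃* P) (Q : Subgroup P) : Submodule 𝒪 A where
  carrier := {a | ∀ u ∈ Q, (σ u : A) * a = a * (σ (φ u) : A)}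
  add_mem' := by intro a b ha hb u hu; rw [mul_add, add_mul, ha u hu, hb u hu]
  zero_mem' := by intro u hu; rw [mul_zero, zero_mul]
  smul_mem' := by intro r a ha u hu
                  rw [mul_smul_comm, smul_mul_assoc, ha u hu]

theorem intFixed_one_mul_mem {σ : P →* Aˣ} {a b : A}
    (ha : a ∈ intFixed 𝒪 σ (1 : MulAut P) ⊤) (hb : b ∈ intFixed 𝒪 σ (1 : MulAut P) ⊤) :
    a * b ∈ intFixed 𝒪 σ (1 : MulAut P) ⊤ := by
  intro u hu
  have ha' : (σ u : A) * a = a * (σ u : A) := by simpa using ha u hu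
  have hb' : (σ u : A) * b = b * (σ u : A) := by simpa using hb u hu
  show (σ u : A) * (a * b) = (a * b) * (σ ((1 : MulAut P) u) : A)
  simp only [MulAut.one_apply]
  rw [← mul_assoc, ha', mul_assoc, hb', mul_assoc]

/-- relative trace `Tr_{Δ_φ(Q)}^{Δ_φ(P)}`. -/
noncomputable def relTr [Finite P] (σ : P →* Aˣ) (φ : P ≃* P) (Q : Subgroup P) (c : A) : A :=
  ∑ᶠ x : Quotient (QuotientGroup.rightRel Q),
    ((σ x.out)⁻¹ : Aˣ) * c * (σ (φ x.out) : A)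

/-- `Σ_{Q < P} A^{Δ_φ(P)}_{Δ_φ(Q)}`. -/
noncomputable def trSum [Finite P] (σ : P →* Aˣ) (φ : P ≃* P) : Submodule 𝒪 A :=
  ⨆ Q : {Q : Subgroup P // Q < ⊤},
    Submodule.span 𝒪 (relTr σ φ Q '' (intFixed 𝒪 σ φ Q))

/-- `Σ_{Q<P} A^{Δ_φ(P)}_{Δ_φ(Q)} + 𝔭·A^{Δ_φ(P)}`. -/
noncomputable def brDen [Finite P] (𝔭 : Ideal 𝒪) (σ : P →* Aˣ) (φ : P ≃* P) : Submodule 𝒪 A :=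
  trSum 𝒪 σ φ ⊔ 𝔭 • intFixed 𝒪 σ φ ⊤

/-- the Brauer quotient `A(Δ_φ(P))`; `A(P) = A(Δ_id(P))`. -/
noncomputable abbrev BrQuot [Finite P] (𝔭 : Ideal 𝒪) (σ : P →* Aˣ) (φ : P ≃* P) :=
  subQuot (intFixed 𝒪 σ φ ⊤) (brDen 𝒪 𝔭 σ φ)

end Common

section Conj

variable {G : Type*} [Group G]

/-- for `x` in the normalizer of `P`, the automorphism `u ↦ x·u·x⁻¹` of `P`;
`φ_x = conjAut P x⁻¹`. -/
def conjAut (P : Subgroup G) (x : ↥(Subgroup.normalizer (P : Set G))) : MulAut ↥P where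
  toFun u := ⟨↑x * ↑u * (↑x)⁻¹, (Subgroup.mem_normalizer_iff.mp x.2 ↑u).mp u.2⟩
  invFun u := ⟨(↑x)⁻¹ * ↑u * ↑x, by
    have h := (Subgroup.mem_normalizer_iff.mp
      (inv_mem x.2 : (↑x)⁻¹ ∈ Subgroup.normalizer (P : Set G)) ↑u).mp u.2
    simpa using h⟩
  left_inv u := by ext; simp [mul_assoc]
  right_inv u := by ext; simp [mul_assoc]
  map_mul' u v := by ext; simp

/-- conjugation as a homomorphism `N_G(P) →* Aut(P)`. -/
def conjHom (P : Subgroup G) : ↥(Subgroup.normalizer (P : Set G)) →* MulAut ↥P where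
  toFun := conjAut P
  map_one' := by
    apply MulEquiv.ext; intro u; ext; simp [conjAut]
  map_mul' x y := by
    apply MulEquiv.ext; intro u; ext; simp [conjAut, mul_assoc]

variable (𝒪 : Type*) [CommRing 𝒪] {A : Type*} [Ring A] [Algebra 𝒪 A]

/-- for `x ∈ N_G(P)`, the image of `x` in `A` lies in `A^{Δ_{φ_x}(P)}`. -/
theorem sigma_mem_conjFixed (σG : G →* Aˣ) (P : Subgroup G) (x : ↥(Subgroup.normalizer (P : Set G))) :
    ((σG ↑x : Aˣ) : A) ∈ intFixed 𝒪 (σG.comp P.subtype) (conjAut P x⁻¹) ⊤ := by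
  intro u _
  have h : σG ↑(u : ↥P) * σG ↑x = σG ↑x * σG ↑((conjAut P x⁻¹ u : ↥P) : G) := by
    rw [← map_mul, ← map_mul]
    congr 1
    show (↑u : G) * ↑x = ↑x * (((↑x)⁻¹ : G) * ↑u * ((↑x)⁻¹)⁻¹)
    group
  have h2 := congrArg (fun z : Aˣ => (z : A)) h
  simpa using h2

/-- for `c ∈ C_G(P)`, the image of `c` in `A` lies in `A^P`. -/
theorem sigma_mem_centralFixed (σG : G →* Aˣ) (P : Subgroup G) {c : G}
    (hc : c ∈ Subgroup.centralizer (P : Set G)) :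
    ((σG c : Aˣ) : A) ∈ intFixed 𝒪 (σG.comp P.subtype) (1 : MulAut ↥P) ⊤ := by
  intro u _
  have h : σG ↑(u : ↥P) * σG c = σG c * σG ↑((((1 : MulAut ↥P)) u : ↥P) : G) := by
    rw [← map_mul, ← map_mul]
    congr 1
    simpa using (Subgroup.mem_centralizer_iff.mp hc ↑u u.2)
  have h2 := congrArg (fun z : Aˣ => (z : A)) h
  simpa using h2

/-- for `a ∈ A^P` and `x ∈ N_G(P)`, `a·x ∈ A^{Δ_{φ_x}(P)}`. -/
theorem aSigma_mem_conjFixed (σG : G →* Aˣ) (P : Subgroup G) (x : ↥(Subgroup.normalizer (P : Set G))) {a : A}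
    (ha : a ∈ intFixed 𝒪 (σG.comp P.subtype) (1 : MulAut ↥P) ⊤) :
    a * ((σG ↑x : Aˣ) : A) ∈ intFixed 𝒪 (σG.comp P.subtype) (conjAut P x⁻¹) ⊤ := by
  intro u hu
  have h1 := ha u hu
  rw [MulAut.one_apply] at h1
  have h2 := sigma_mem_conjFixed 𝒪 σG P x u hu
  rw [← mul_assoc, h1, mul_assoc, h2, ← mul_assoc]

end Conj

section Rmul
variable {𝒪 : Type*} [CommRing 𝒪]
variable {A : Type*} [Ring A] [Algebra 𝒪 A]
variable {P : Type*} [Group P] [Finite P]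
variable (σ : P →* Aˣ) (φ ψ : P ≃* P) (y : Aˣ)

variable (h : ∀ u : P, ((σ (φ u) : A)) * (y : A) = (y : A) * (σ (ψ u) : A)) in
theorem dummy_unused : True := trivial

theorem rmul_mem_intFixed (h : ∀ u : P, ((σ (φ u) : A)) * (y : A) = (y : A) * (σ (ψ u) : A)) (Q : Subgroup P) {a : A} (ha : a ∈ intFixed 𝒪 σ φ Q) :
    a * (y : A) ∈ intFixed 𝒪 σ ψ Q := by
  intro u hu
  rw [← mul_assoc, ha u hu, mul_assoc, h u, ← mul_assoc]

theorem rmul_relTr (h : ∀ u : P, ((σ (φ u) : A)) * (y : A) = (y : A) * (σ (ψ u) : A)) (Q : Subgroup P) (c : A) :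
    relTr σ φ Q c * (y : A) = relTr σ ψ Q (c * (y : A)) := by
  rw [relTr, relTr, finsum_mul' _ _ (Set.toFinite _)]
  refine finsum_congr fun q => ?_
  rw [mul_assoc, mul_assoc, h q.out, mul_assoc, mul_assoc]

theorem rmul_mem_brDen (h : ∀ u : P, ((σ (φ u) : A)) * (y : A) = (y : A) * (σ (ψ u) : A)) (𝔭 : Ideal 𝒪) {a : A} (ha : a ∈ brDen 𝒪 𝔭 σ φ) :
    a * (y : A) ∈ brDen 𝒪 𝔭 σ ψ := by
  have key : Submodule.map (LinearMap.mulRight 𝒪 (y : A)) (brDen 𝒪 𝔭 σ φ) ≤ brDen 𝒪 𝔭 σ ψ := by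
    rw [brDen, Submodule.map_sup]
    apply sup_le_sup
    · rw [trSum, Submodule.map_iSup]
      refine iSup_mono fun Q => ?_
      rw [Submodule.map_span]
      refine Submodule.span_mono ?_
      rintro _ ⟨_, ⟨c, hc, rfl⟩, rfl⟩
      exact ⟨c * (y : A), rmul_mem_intFixed σ φ ψ y h Q hc,
        (rmul_relTr σ φ ψ y h Q c).symm⟩
    · rw [Submodule.map_smul'']
      refine Submodule.smul_mono le_rfl ?_
      rintro _ ⟨a, ha, rfl⟩
      exact rmul_mem_intFixed σ φ ψ y h ⊤ ha
  exact key ⟨a, ha, rfl⟩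

noncomputable def rmulQ (h : ∀ u : P, ((σ (φ u) : A)) * (y : A) = (y : A) * (σ (ψ u) : A)) (𝔭 : Ideal 𝒪) : BrQuot 𝒪 𝔭 σ φ →ₗ[𝒪] BrQuot 𝒪 𝔭 σ ψ :=
  Submodule.mapQ _ _
    ((LinearMap.mulRight 𝒪 (y : A)).restrict
      (fun a ha => rmul_mem_intFixed σ φ ψ y h ⊤ ha) :
        ↥(intFixed 𝒪 σ φ ⊤) →ₗ[𝒪] ↥(intFixed 𝒪 σ ψ ⊤))
    (by intro a ha
        exact rmul_mem_brDen σ φ ψ y h 𝔭 (by simpa using ha))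

theorem rmulQ_mk (h : ∀ u : P, ((σ (φ u) : A)) * (y : A) = (y : A) * (σ (ψ u) : A)) (𝔭 : Ideal 𝒪) {a : A} (ha : a ∈ intFixed 𝒪 σ φ ⊤)
    (hb : a * (y : A) ∈ intFixed 𝒪 σ ψ ⊤) :
    rmulQ σ φ ψ y h 𝔭 (Submodule.Quotient.mk ⟨a, ha⟩) =
      Submodule.Quotient.mk ⟨a * (y : A), hb⟩ := by
  rfl


noncomputable def castBr (𝔭 : Ideal 𝒪) {φ ψ : P ≃* P} (h : φ = ψ) :
    BrQuot 𝒪 𝔭 σ φ →ₗ[𝒪] BrQuot 𝒪 𝔭 σ ψ := h ▸ LinearMap.id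

theorem castBr_mk (𝔭 : Ideal 𝒪) {φ ψ : P ≃* P} (h : φ = ψ) {a : A}
    (ha : a ∈ intFixed 𝒪 σ φ ⊤) (hb : a ∈ intFixed 𝒪 σ ψ ⊤) :
    castBr σ 𝔭 h (Submodule.Quotient.mk ⟨a, ha⟩) = Submodule.Quotient.mk ⟨a, hb⟩ := by
  subst h; rfl

end Rmul

section Main
variable {𝒪 : Type*} [CommRing 𝒪] {A : Type*} [Ring A] [Algebra 𝒪 A]
variable {G : Type*} [Group G] [Finite G] (P : Subgroup G) (σG : G →* Aˣ) (𝔭 : Ideal 𝒪)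

theorem fwd_h (x : ↥(Subgroup.normalizer (P : Set G))) :
    ∀ u : ↥P, (((σG.comp P.subtype) ((1 : MulAut ↥P) u) : A)) * ((σG ↑x : Aˣ) : A) =
      ((σG ↑x : Aˣ) : A) * ((σG.comp P.subtype) ((conjAut P x⁻¹) u) : A) := by
  intro u
  have h1 : ((σG.comp P.subtype) ((1 : MulAut ↥P) u) : A) = ((σG ↑(u : ↥P) : Aˣ) : A) := rfl
  have h2 : ((σG.comp P.subtype) ((conjAut P x⁻¹) u) : A)
      = ((σG (↑(x⁻¹ : ↥(Subgroup.normalizer (P : Set G))) * ↑u * (↑(x⁻¹ : ↥(Subgroup.normalizer (P : Set G))))⁻¹ : G) : Aˣ) : A) := rfl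
  rw [h1, h2, ← Units.val_mul, ← Units.val_mul, ← map_mul, ← map_mul]
  congr 2
  push_cast
  group

theorem bwd_h (x : ↥(Subgroup.normalizer (P : Set G))) :
    ∀ u : ↥P, (((σG.comp P.subtype) ((conjAut P x⁻¹) u) : A)) * ((σG ↑(x⁻¹) : Aˣ) : A) =
      ((σG ↑(x⁻¹) : Aˣ) : A) * ((σG.comp P.subtype) ((1 : MulAut ↥P) u) : A) := by
  intro u
  have h1 : ((σG.comp P.subtype) ((1 : MulAut ↥P) u) : A) = ((σG ↑(u : ↥P) : Aˣ) : A) := rfl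
  have h2 : ((σG.comp P.subtype) ((conjAut P x⁻¹) u) : A)
      = ((σG (↑(x⁻¹ : ↥(Subgroup.normalizer (P : Set G))) * ↑u * (↑(x⁻¹ : ↥(Subgroup.normalizer (P : Set G))))⁻¹ : G) : Aˣ) : A) := rfl
  rw [h1, h2, ← Units.val_mul, ← Units.val_mul, ← map_mul, ← map_mul]
  congr 2
  push_cast
  group

noncomputable def fwd (x : ↥(Subgroup.normalizer (P : Set G))) :
    BrQuot 𝒪 𝔭 (σG.comp P.subtype) (1 : MulAut ↥P) →ₗ[𝒪]
      BrQuot 𝒪 𝔭 (σG.comp P.subtype) (conjAut P x⁻¹) :=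
  rmulQ (σG.comp P.subtype) 1 (conjAut P x⁻¹) (σG ↑x) (fwd_h P σG x) 𝔭

noncomputable def bwd (x : ↥(Subgroup.normalizer (P : Set G))) :
    BrQuot 𝒪 𝔭 (σG.comp P.subtype) (conjAut P x⁻¹) →ₗ[𝒪]
      BrQuot 𝒪 𝔭 (σG.comp P.subtype) (1 : MulAut ↥P) :=
  rmulQ (σG.comp P.subtype) (conjAut P x⁻¹) 1 (σG ↑(x⁻¹)) (bwd_h P σG x) 𝔭

end Main

section Main2
variable {𝒪 : Type*} [CommRing 𝒪] {A : Type*} [Ring A] [Algebra 𝒪 A]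
variable {G : Type*} [Group G] [Finite G] (P : Subgroup G) (σG : G →* Aˣ) (𝔭 : Ideal 𝒪)

theorem sigma_mem_conjFixed' (x : ↥(Subgroup.normalizer (P : Set G))) :
    ((σG ↑x : Aˣ) : A) ∈ intFixed 𝒪 (σG.comp P.subtype) (conjAut P x⁻¹) ⊤ := by
  intro u _
  simpa using fwd_h P σG x u

theorem sigma_mem_centralFixed' {c : G}
    (hc : c ∈ Subgroup.centralizer (P : Set G)) :
    ((σG c : Aˣ) : A) ∈ intFixed 𝒪 (σG.comp P.subtype) (1 : MulAut ↥P) ⊤ := by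
  intro u _
  have h : (↑u : G) * c = c * ↑u := Subgroup.mem_centralizer_iff.mp hc ↑u u.2
  show ((σG ↑u : Aˣ) : A) * _ = _ * ((σG ↑((1 : MulAut ↥P) u) : Aˣ) : A)
  rw [MulAut.one_apply, ← Units.val_mul, ← Units.val_mul, ← map_mul, ← map_mul, h]

theorem aSigma_mem_conjFixed' (x : ↥(Subgroup.normalizer (P : Set G))) {a : A}
    (ha : a ∈ intFixed 𝒪 (σG.comp P.subtype) (1 : MulAut ↥P) ⊤) :
    a * ((σG ↑x : Aˣ) : A) ∈ intFixed 𝒪 (σG.comp P.subtype) (conjAut P x⁻¹) ⊤ :=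
  rmul_mem_intFixed _ _ _ _ (fwd_h P σG x) ⊤ ha

theorem conjAut_central_mul {c x : ↥(Subgroup.normalizer (P : Set G))}
    (hc : (↑c : G) ∈ Subgroup.centralizer (P : Set G)) :
    conjAut P (c * x)⁻¹ = conjAut P x⁻¹ := by
  apply MulEquiv.ext; intro u; apply Subtype.ext
  have huc : (↑u : G) * ↑c = ↑c * ↑u := Subgroup.mem_centralizer_iff.mp hc ↑u u.2
  show (↑((c * x)⁻¹ : ↥(Subgroup.normalizer (P : Set G))) : G) * ↑u * (↑((c * x)⁻¹ : ↥(Subgroup.normalizer (P : Set G))) : G)⁻¹ =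
    (↑(x⁻¹ : ↥(Subgroup.normalizer (P : Set G))) : G) * ↑u * (↑(x⁻¹ : ↥(Subgroup.normalizer (P : Set G))) : G)⁻¹
  push_cast
  have h2 : (↑c : G)⁻¹ * (↑u * ↑c) = ↑u := by rw [huc, ← mul_assoc, inv_mul_cancel, one_mul]
  simp only [mul_inv_rev, inv_inv, mul_assoc]
  congr 1
  rw [show (↑c : G)⁻¹ * (↑u * (↑c * ↑x)) = ((↑c : G)⁻¹ * (↑u * ↑c)) * ↑x by group, h2]

theorem central_of_conjHom_one {n : ↥(Subgroup.normalizer (P : Set G))} (hn : conjHom P n = 1) :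
    (↑n : G) ∈ Subgroup.centralizer (P : Set G) := by
  rw [Subgroup.mem_centralizer_iff]
  intro g hg
  have h := congrArg (fun e : MulAut ↥P => ((e ⟨g, hg⟩ : ↥P) : G)) hn
  simp only [conjHom, conjAut, MonoidHom.coe_mk, OneHom.coe_mk, MulEquiv.coe_mk,
    Equiv.coe_fn_mk, MulAut.one_apply] at h
  -- h : ↑n * g * (↑n)⁻¹ = g
  have : (↑n : G) * g * (↑n)⁻¹ = g := h
  calc g * ↑n = (↑n * g * (↑n)⁻¹) * ↑n := by rw [this]
    _ = ↑n * g := by group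

/-- the relations submodule. -/
noncomputable abbrev RelSpan : Submodule 𝒪 (↥(Subgroup.normalizer (P : Set G)) →₀ BrQuot 𝒪 𝔭
    (σG.comp P.subtype) (1 : MulAut ↥P)) :=
  Submodule.span 𝒪 {z | ∃ (c x : ↥(Subgroup.normalizer (P : Set G)))
    (hc : (↑c : G) ∈ Subgroup.centralizer (P : Set G)) (a : A)
    (ha : a ∈ intFixed 𝒪 (σG.comp P.subtype) (1 : MulAut ↥P) ⊤),
    z = Finsupp.single (c * x) (Submodule.Quotient.mk ⟨a, ha⟩) -
      Finsupp.single x (Submodule.Quotient.mk ⟨a * ((σG ↑c : Aˣ) : A),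
        intFixed_one_mul_mem 𝒪 ha (sigma_mem_centralFixed' P σG hc)⟩)}

/-- the graded component family. -/
noncomputable abbrev Bf : (conjHom P).range → Type _ :=
  fun i => BrQuot 𝒪 𝔭 (σG.comp P.subtype) (i : MulAut ↥P)

theorem of_mk_congr {i j : (conjHom P).range} (h : i = j) {a : A}
    (hi : a ∈ intFixed 𝒪 (σG.comp P.subtype) (i : MulAut ↥P) ⊤)
    (hj : a ∈ intFixed 𝒪 (σG.comp P.subtype) (j : MulAut ↥P) ⊤) :
    DirectSum.of (Bf P σG 𝔭) i (Submodule.Quotient.mk ⟨a, hi⟩) =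
      DirectSum.of (Bf P σG 𝔭) j (Submodule.Quotient.mk ⟨a, hj⟩) := by
  subst h; rfl

noncomputable instance BfAddCommGroup : AddCommGroup (⨁ i : (conjHom P).range, Bf P σG 𝔭 i) :=
  @DirectSum.instAddCommGroup (conjHom P).range (Bf P σG 𝔭) (fun _ => inferInstance)

noncomputable def F0 : (↥(Subgroup.normalizer (P : Set G)) →₀ BrQuot 𝒪 𝔭 (σG.comp P.subtype) (1 : MulAut ↥P))
    →ₗ[𝒪] ⨁ i : (conjHom P).range, Bf P σG 𝔭 i :=
  Finsupp.lsum 𝒪 fun x : ↥(Subgroup.normalizer (P : Set G)) =>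
    (DirectSum.lof 𝒪 _ (Bf P σG 𝔭) ⟨conjAut P x⁻¹, ⟨x⁻¹, rfl⟩⟩).comp (fwd P σG 𝔭 x)

theorem F0_single (x : ↥(Subgroup.normalizer (P : Set G))) {a : A}
    (ha : a ∈ intFixed 𝒪 (σG.comp P.subtype) (1 : MulAut ↥P) ⊤) :
    F0 P σG 𝔭 (Finsupp.single x (Submodule.Quotient.mk ⟨a, ha⟩)) =
      DirectSum.of (Bf P σG 𝔭) ⟨conjAut P x⁻¹, ⟨x⁻¹, rfl⟩⟩
        (Submodule.Quotient.mk ⟨a * ((σG ↑x : Aˣ) : A), aSigma_mem_conjFixed' P σG x ha⟩) := by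
  rw [F0, Finsupp.lsum_single, LinearMap.comp_apply, fwd,
    rmulQ_mk _ _ _ _ _ _ ha (aSigma_mem_conjFixed' P σG x ha), DirectSum.lof_eq_of]

theorem F0_ker : RelSpan P σG 𝔭 ≤ LinearMap.ker (F0 P σG 𝔭) := by
  rw [RelSpan, Submodule.span_le]
  rintro z ⟨c, x, hc, a, ha, rfl⟩
  have hax : a * ((σG ↑c : Aˣ) : A) ∈ intFixed 𝒪 (σG.comp P.subtype) (1 : MulAut ↥P) ⊤ :=
    intFixed_one_mul_mem 𝒪 ha (sigma_mem_centralFixed' P σG hc)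
  simp only [SetLike.mem_coe, LinearMap.mem_ker, map_sub, F0_single]
  rw [sub_eq_zero]
  have hval : a * ((σG ↑(c * x) : Aˣ) : A) =
      (a * ((σG ↑c : Aˣ) : A)) * ((σG ↑x : Aˣ) : A) := by
    push_cast [map_mul, inv_inv]
    rw [mul_assoc]
  have h1 : (Submodule.Quotient.mk ⟨a * ((σG ↑(c * x) : Aˣ) : A),
        aSigma_mem_conjFixed' P σG (c * x) ha⟩ :
      BrQuot 𝒪 𝔭 (σG.comp P.subtype) (conjAut P (c * x)⁻¹)) =
      Submodule.Quotient.mk ⟨(a * ((σG ↑c : Aˣ) : A)) * ((σG ↑x : Aˣ) : A),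
        hval ▸ aSigma_mem_conjFixed' P σG (c * x) ha⟩ := by
    exact congrArg _ (Subtype.ext hval)
  rw [h1]
  exact of_mk_congr P σG 𝔭 (Subtype.ext (conjAut_central_mul P hc)) _ _

noncomputable def Fmap : ((↥(Subgroup.normalizer (P : Set G)) →₀ BrQuot 𝒪 𝔭 (σG.comp P.subtype) (1 : MulAut ↥P))
    ⧸ RelSpan P σG 𝔭) →ₗ[𝒪] ⨁ i : (conjHom P).range, Bf P σG 𝔭 i :=
  Submodule.liftQ _ (F0 P σG 𝔭) (F0_ker P σG 𝔭)

theorem Fmap_mk_single (x : ↥(Subgroup.normalizer (P : Set G))) {a : A}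
    (ha : a ∈ intFixed 𝒪 (σG.comp P.subtype) (1 : MulAut ↥P) ⊤) :
    Fmap P σG 𝔭 (Submodule.Quotient.mk (Finsupp.single x (Submodule.Quotient.mk ⟨a, ha⟩))) =
      DirectSum.of (Bf P σG 𝔭) ⟨conjAut P x⁻¹, ⟨x⁻¹, rfl⟩⟩
        (Submodule.Quotient.mk ⟨a * ((σG ↑x : Aˣ) : A), aSigma_mem_conjFixed' P σG x ha⟩) := by
  rw [Fmap, Submodule.liftQ_apply, F0_single]

end Main2

section Main3
variable {𝒪 : Type*} [CommRing 𝒪] {A : Type*} [Ring A] [Algebra 𝒪 A]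
variable {G : Type*} [Group G] [Finite G] (P : Subgroup G) (σG : G →* Aˣ) (𝔭 : Ideal 𝒪)

noncomputable def reprK (i : (conjHom P).range) : ↥(Subgroup.normalizer (P : Set G)) :=
  (MonoidHom.mem_range.mp i.2).choose

theorem reprK_spec (i : (conjHom P).range) : conjHom P (reprK P i) = ↑i :=
  (MonoidHom.mem_range.mp i.2).choose_spec

theorem castEqK (i : (conjHom P).range) :
    (↑i : MulAut ↥P) = conjAut P ((reprK P i)⁻¹)⁻¹ := by
  rw [inv_inv, ← reprK_spec P i]; rfl

theorem bwd_mem (x : ↥(Subgroup.normalizer (P : Set G))) {b : A}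
    (hb : b ∈ intFixed 𝒪 (σG.comp P.subtype) (conjAut P x⁻¹) ⊤) :
    b * ((σG ↑(x⁻¹) : Aˣ) : A) ∈ intFixed 𝒪 (σG.comp P.subtype) (1 : MulAut ↥P) ⊤ :=
  rmul_mem_intFixed _ _ _ _ (bwd_h P σG x) ⊤ hb

noncomputable def gcomp (i : (conjHom P).range) : Bf P σG 𝔭 i →ₗ[𝒪]
    ((↥(Subgroup.normalizer (P : Set G)) →₀ BrQuot 𝒪 𝔭 (σG.comp P.subtype) (1 : MulAut ↥P)) ⧸ RelSpan P σG 𝔭) :=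
  (Submodule.mkQ _).comp ((Finsupp.lsingle ((reprK P i)⁻¹)).comp
    ((bwd P σG 𝔭 ((reprK P i)⁻¹)).comp (castBr (σG.comp P.subtype) 𝔭 (castEqK P i))))

noncomputable def Gmap : (⨁ i : (conjHom P).range, Bf P σG 𝔭 i) →ₗ[𝒪]
    ((↥(Subgroup.normalizer (P : Set G)) →₀ BrQuot 𝒪 𝔭 (σG.comp P.subtype) (1 : MulAut ↥P)) ⧸ RelSpan P σG 𝔭) :=
  DirectSum.toModule 𝒪 _ _ (gcomp P σG 𝔭)

theorem Gmap_of (i : (conjHom P).range) {b : A}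
    (hb : b ∈ intFixed 𝒪 (σG.comp P.subtype) (↑i : MulAut ↥P) ⊤) :
    Gmap P σG 𝔭 (DirectSum.of (Bf P σG 𝔭) i (Submodule.Quotient.mk ⟨b, hb⟩)) =
      Submodule.Quotient.mk (Finsupp.single ((reprK P i)⁻¹)
        (Submodule.Quotient.mk ⟨b * ((σG ↑(((reprK P i)⁻¹)⁻¹) : Aˣ) : A),
          bwd_mem P σG ((reprK P i)⁻¹) ((castEqK P i) ▸ hb)⟩)) := by
  rw [Gmap, ← DirectSum.lof_eq_of 𝒪, DirectSum.toModule_lof, gcomp]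
  simp only [LinearMap.comp_apply]
  rw [castBr_mk _ _ _ hb ((castEqK P i) ▸ hb), bwd,
    rmulQ_mk _ _ _ _ _ _ ((castEqK P i) ▸ hb) (bwd_mem P σG ((reprK P i)⁻¹) ((castEqK P i) ▸ hb))]
  rfl

theorem GF_id : (Gmap P σG 𝔭).comp (Fmap P σG 𝔭) = LinearMap.id := by
  apply Submodule.linearMap_qext
  apply Finsupp.lhom_ext
  intro x m
  obtain ⟨⟨a, ha⟩, rfl⟩ := Submodule.Quotient.mk_surjective _ m
  simp only [LinearMap.comp_apply, Submodule.mkQ_apply, LinearMap.id_apply]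
  rw [Fmap_mk_single, Gmap_of]
  set i : (conjHom P).range := ⟨conjAut P x⁻¹, ⟨x⁻¹, rfl⟩⟩ with hi
  set w : ↥(Subgroup.normalizer (P : Set G)) := reprK P i with hw
  have hcent : (↑(x * w) : G) ∈ Subgroup.centralizer (P : Set G) := by
    apply central_of_conjHom_one P
    have h1 : conjHom P w = conjAut P x⁻¹ := reprK_spec P i
    have h2 : conjAut P x⁻¹ = conjHom P x⁻¹ := rfl
    rw [map_mul, h1, h2, ← map_mul, mul_inv_cancel, map_one]
  have hgen : a * ((σG ↑(x * w) : Aˣ) : A) ∈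
      intFixed 𝒪 (σG.comp P.subtype) (1 : MulAut ↥P) ⊤ :=
    intFixed_one_mul_mem 𝒪 ha (sigma_mem_centralFixed' P σG hcent)
  have key : Finsupp.single ((x * w) * w⁻¹) (Submodule.Quotient.mk ⟨a, ha⟩) -
      Finsupp.single w⁻¹ (Submodule.Quotient.mk ⟨a * ((σG ↑(x * w) : Aˣ) : A),
        intFixed_one_mul_mem 𝒪 ha (sigma_mem_centralFixed' P σG hcent)⟩) ∈ RelSpan P σG 𝔭 :=
    Submodule.subset_span ⟨x * w, w⁻¹, hcent, a, ha, rfl⟩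
  have e1 : (x * w) * w⁻¹ = x := mul_inv_cancel_right x w
  have e2 : (Submodule.Quotient.mk ⟨a * ((σG ↑(x * w) : Aˣ) : A),
        intFixed_one_mul_mem 𝒪 ha (sigma_mem_centralFixed' P σG hcent)⟩ :
      BrQuot 𝒪 𝔭 (σG.comp P.subtype) (1 : MulAut ↥P)) =
      Submodule.Quotient.mk ⟨(a * ((σG ↑x : Aˣ) : A)) * ((σG ↑((w⁻¹)⁻¹) : Aˣ) : A),
        bwd_mem P σG w⁻¹ ((castEqK P i) ▸ aSigma_mem_conjFixed' P σG x ha)⟩ := by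
    refine congrArg _ (Subtype.ext ?_)
    show a * ((σG ↑(x * w) : Aˣ) : A) = _
    push_cast [map_mul, inv_inv]
    rw [mul_assoc]
  rw [e1, e2] at key
  symm
  rw [Submodule.Quotient.eq]
  exact key

theorem FG_id : (Fmap P σG 𝔭).comp (Gmap P σG 𝔭) = LinearMap.id := by
  refine DirectSum.linearMap_ext 𝒪 fun i => ?_
  apply Submodule.linearMap_qext
  refine LinearMap.ext fun s => ?_
  obtain ⟨b, hb⟩ := s
  simp only [LinearMap.comp_apply, Submodule.mkQ_apply, LinearMap.id_apply]
  rw [DirectSum.lof_eq_of 𝒪, Gmap_of P σG 𝔭 i hb, Fmap_mk_single]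
  set w : ↥(Subgroup.normalizer (P : Set G)) := reprK P i with hw
  have hval : (b * ((σG ↑((w⁻¹)⁻¹) : Aˣ) : A)) * ((σG ↑(w⁻¹) : Aˣ) : A) = b := by
    rw [mul_assoc, ← Units.val_mul, ← map_mul]
    have : (↑((w⁻¹)⁻¹ : ↥(Subgroup.normalizer (P : Set G))) : G) * ↑(w⁻¹ : ↥(Subgroup.normalizer (P : Set G))) = 1 := by
      push_cast; group
    rw [this, map_one, Units.val_one, mul_one]
  have e3 : (Submodule.Quotient.mk ⟨(b * ((σG ↑((w⁻¹)⁻¹) : Aˣ) : A)) * ((σG ↑(w⁻¹) : Aˣ) : A),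
        aSigma_mem_conjFixed' P σG w⁻¹ (bwd_mem P σG w⁻¹ ((castEqK P i) ▸ hb))⟩ :
      BrQuot 𝒪 𝔭 (σG.comp P.subtype) (conjAut P (w⁻¹)⁻¹)) =
      Submodule.Quotient.mk ⟨b, hval ▸
        aSigma_mem_conjFixed' P σG w⁻¹ (bwd_mem P σG w⁻¹ ((castEqK P i) ▸ hb))⟩ :=
    congrArg _ (Subtype.ext hval)
  rw [e3, of_mk_congr P σG 𝔭 (Subtype.ext (castEqK P i).symm) _ hb]

end Main3



/-- Let `G` be a finite group, `A` a `G`-interior `𝒪`-algebra, `P` a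
`p`-subgroup of `G`, and `K := {φ_x : x ∈ N_G(P)} ≤ Aut(P)` (identified with
`N_G(P)/C_G(P)`).  Then the map `A(P) ⊗_{kC_G(P)} kN_G(P) → N̄_A^K(P)` sending
`Br_P(a) ⊗ x` to the class of `a·x` in `A(Δ_{φ_x}(P))` is a well-defined isomorphism of
`N_G(P)/C_G(P)`-graded `k`-algebras.  (Here `A(P) ⊗_{kC_G(P)} kN_G(P)` is presented as the
quotient of the free module `N_G(P) →₀ A(P)` by the balancing relations
`Br_P(a) ⊗ c·x ∼ Br_P(a·c) ⊗ x` for `c ∈ C_G(P)`; the stated formula on the generators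
determines the grading compatibility and the multiplicativity
`(Br_P(a) ⊗ x)(Br_P(b) ⊗ y) = Br_P(a·(x·b·x⁻¹)) ⊗ xy`.) -/
theorem stmt5
    (𝒪 : Type*) [CommRing 𝒪] [IsDomain 𝒪] [IsDiscreteValuationRing 𝒪]
    [IsAdicComplete (IsLocalRing.maximalIdeal 𝒪) 𝒪]
    (p : ℕ) [Fact p.Prime] [CharP (IsLocalRing.ResidueField 𝒪) p]
    (G : Type*) [Group G] [Finite G] (P : Subgroup G) (hP : IsPGroup p ↥P)
    (A : Type*) [Ring A] [Algebra 𝒪 A] (σG : G →* Aˣ) :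
    ∃ E : ((↥(Subgroup.normalizer (P : Set G)) →₀ BrQuot 𝒪 (IsLocalRing.maximalIdeal 𝒪)
            (σG.comp P.subtype) (1 : MulAut ↥P)) ⧸
          Submodule.span 𝒪 {z | ∃ (c x : ↥(Subgroup.normalizer (P : Set G)))
            (hc : (↑c : G) ∈ Subgroup.centralizer (P : Set G)) (a : A)
            (ha : a ∈ intFixed 𝒪 (σG.comp P.subtype) (1 : MulAut ↥P) ⊤),
            z = Finsupp.single (c * x) (Submodule.Quotient.mk ⟨a, ha⟩) -
              Finsupp.single x (Submodule.Quotient.mk ⟨a * ((σG ↑c : Aˣ) : A),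
                intFixed_one_mul_mem 𝒪 ha (sigma_mem_centralFixed 𝒪 σG P hc)⟩)})
        ≃ₗ[𝒪]
        (⨁ φ : (conjHom P).range, BrQuot 𝒪 (IsLocalRing.maximalIdeal 𝒪)
          (σG.comp P.subtype) (φ : MulAut ↥P)),
      ∀ (x : ↥(Subgroup.normalizer (P : Set G))) (a : A)
        (ha : a ∈ intFixed 𝒪 (σG.comp P.subtype) (1 : MulAut ↥P) ⊤),
        E (Submodule.Quotient.mk (Finsupp.single x (Submodule.Quotient.mk ⟨a, ha⟩))) =
          DirectSum.of _ (⟨conjAut P x⁻¹, ⟨x⁻¹, rfl⟩⟩ : (conjHom P).range)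
            (Submodule.Quotient.mk ⟨a * ((σG ↑x : Aˣ) : A),
              aSigma_mem_conjFixed 𝒪 σG P x ha⟩) := by
  
  classical
  refine ⟨LinearEquiv.ofLinear (Fmap P σG (IsLocalRing.maximalIdeal 𝒪))
      (Gmap P σG (IsLocalRing.maximalIdeal 𝒪))
      (FG_id P σG (IsLocalRing.maximalIdeal 𝒪)) (GF_id P σG (IsLocalRing.maximalIdeal 𝒪)), ?_⟩
  intro x a ha
  rw [LinearEquiv.ofLinear_apply]
  exact Fmap_mk_single P σG (IsLocalRing.maximalIdeal 𝒪) x ha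
end

section
/- With K := Aut_Ḡ(P) and K_1 := Aut_{1̄}(P): (i) A(Δ_φ(P)) = 0 for all φ ∈ Aut(P) \ K, so N̄_A^{Aut(P)}(P) = N̄_A^K(P); (ii) for a pair (φ, z̄) with φ ∈ K, z̄ ∈ Ḡ and (φ(u))‾ = (z^{-1}uz)‾ for all u ∈ P, let (B⊗z)(Δ_φ(P)) denote the image of (B⊗z) ∩ A^{Δ_φ(P)} in A(Δ_φ(P)); then A(Δ_φ(P)) = ⊕_{z̄} (B⊗z)(Δ_φ(P)), the sum over all such z̄, and setting, for each coset g̃ ∈ U/U', N̄^K_A(P)_{g̃} := ⊕ (B⊗z)(Δ_φ(P)) over all pairs (φ, z̄) as above with z̄ ∈ g̃, one has N̄^K_A(P) = ⊕_{g̃∈U/U'} N̄^K_A(P)_{g̃} with N̄^K_A(P)_{g̃} · N̄^K_A(P)_{h̃} ⊆ N̄^K_A(P)_{g̃h̃}; (iii) the identity component N̄^K_A(P)_{1̃} equals ⊕_{φ∈K_1} ⊕_{g'H ∈ U'/H} (B⊗g')(Δ_φ(P)). -/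
open scoped Classical

section GroupDefs

variable {G : Type*} [Group G]

/-- `Aut_Ḡ(P)`. -/
def AutBar (H P : Subgroup G) [H.Normal] : Subgroup (MulAut ↥P) where
  carrier := {φ | ∃ g : G, ∀ u : ↥P, ((φ u : G) : G ⧸ H) = ↑(g⁻¹ * ↑u * g)}
  one_mem' := ⟨1, fun u => by simp⟩
  mul_mem' := by
    rintro φ ψ ⟨g, hg⟩ ⟨h, hh⟩
    refine ⟨h * g, fun u => ?_⟩
    rw [MulAut.mul_apply, hg (ψ u)]
    simp only [QuotientGroup.mk_mul, QuotientGroup.mk_inv, mul_inv_rev, hh u]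
    group
  inv_mem' := by
    rintro φ ⟨g, hg⟩
    refine ⟨g⁻¹, fun u => ?_⟩
    have h1 := hg (φ⁻¹ u)
    rw [MulAut.apply_inv_self] at h1
    simp only [QuotientGroup.mk_mul, QuotientGroup.mk_inv, inv_inv] at h1 ⊢
    rw [h1]
    group

/-- `Aut_1̄(P)`. -/
def AutOne (H P : Subgroup G) [H.Normal] : Subgroup (MulAut ↥P) where
  carrier := {φ | ∀ u : ↥P, ((φ u : G) : G ⧸ H) = ↑(u : G)}
  one_mem' := fun u => rfl
  mul_mem' := by
    intro φ ψ hφ hψ u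
    rw [MulAut.mul_apply, hφ (ψ u), hψ u]
  inv_mem' := by
    intro φ hφ u
    have h1 := hφ (φ⁻¹ u)
    rw [MulAut.apply_inv_self] at h1
    exact h1.symm

/-- `U'`, the inverse image of `C_Ḡ(P̄)` in `G`. -/
def Uprime (H P : Subgroup G) [H.Normal] : Subgroup G where
  carrier := {g : G | ∀ u : ↥P, Commute (↑g : G ⧸ H) ↑(u : G)}
  one_mem' := fun u => by
    rw [QuotientGroup.mk_one]; exact Commute.one_left _
  mul_mem' := by
    intro g h hg hh u
    rw [QuotientGroup.mk_mul]
    exact (hg u).mul_left (hh u)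
  inv_mem' := by
    intro g hg u
    rw [QuotientGroup.mk_inv]
    exact (hg u).inv_left

end GroupDefs

section Work
open DirectSum
variable {𝒪 : Type*} [CommRing 𝒪]
variable {G : Type*} [Group G] [Finite G] {H P : Subgroup G} [H.Normal]
variable {A : Type*} [Ring A] [Algebra 𝒪 A]
variable (σ : ↥P →* Aˣ) (φ : MulAut ↥P)

/-- the basic twisted-conjugation operator. -/
def Tmap (u : ↥P) : A →ₗ[𝒪] A where
  toFun a := ((σ u)⁻¹ : Aˣ) * a * (σ (φ u) : A)
  map_add' a b := by simp only [mul_add, add_mul]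
  map_smul' r a := by simp only [RingHom.id_apply, mul_smul_comm, smul_mul_assoc]

lemma Tmap_apply (u : ↥P) (a : A) :
    Tmap (𝒪 := 𝒪) σ φ u a = ((σ u)⁻¹ : Aˣ) * a * (σ (φ u) : A) := rfl

lemma Tmap_comp (u v : ↥P) (a : A) :
    Tmap (𝒪 := 𝒪) σ φ u (Tmap (𝒪 := 𝒪) σ φ v a) = Tmap (𝒪 := 𝒪) σ φ (v * u) a := by
  simp only [Tmap_apply, map_mul, mul_inv_rev, Units.val_mul, mul_assoc]

lemma mem_intFixed_iff {Q : Subgroup P} {a : A} :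
    a ∈ intFixed 𝒪 σ φ Q ↔ ∀ u ∈ Q, Tmap (𝒪 := 𝒪) σ φ u a = a := by
  constructor
  · intro h u hu
    rw [Tmap_apply, mul_assoc, ← h u hu, ← mul_assoc, Units.inv_mul, one_mul]
  · intro h u hu
    have := h u hu
    rw [Tmap_apply] at this
    calc (σ u : A) * a = (σ u : A) * (((σ u)⁻¹ : Aˣ) * a * (σ (φ u) : A)) := by rw [this]
    _ = a * (σ (φ u) : A) := by rw [← mul_assoc, ← mul_assoc, Units.mul_inv, one_mul]

/-- the right action of `P` on `G ⧸ H` associated to `φ`. -/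
def zact (z : G ⧸ H) (u : ↥P) : G ⧸ H :=
  ((u : G) : G ⧸ H)⁻¹ * z * (((φ u : ↥P) : G) : G ⧸ H)

lemma zact_one (z : G ⧸ H) : zact φ z 1 = z := by
  simp [zact]

lemma zact_mul (z : G ⧸ H) (u v : ↥P) :
    zact φ (zact φ z u) v = zact φ z (u * v) := by
  simp only [zact, map_mul, Subgroup.coe_mul, QuotientGroup.mk_mul, mul_inv_rev]
  group

lemma zact_injective (u : ↥P) {z w : G ⧸ H} (h : zact φ z u = zact φ w u) : z = w := by
  unfold zact at h
  exact mul_left_cancel (mul_right_cancel h)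

lemma mulMemA {𝒜 : G ⧸ H → Submodule 𝒪 A}
    (hmul : ∀ x y : G ⧸ H, 𝒜 x * 𝒜 y ≤ 𝒜 (x * y))
    {x y : G ⧸ H} {a b : A} (ha : a ∈ 𝒜 x) (hb : b ∈ 𝒜 y) : a * b ∈ 𝒜 (x * y) :=
  hmul x y (Submodule.mul_mem_mul ha hb)

lemma Tmap_mem {𝒜 : G ⧸ H → Submodule 𝒪 A}
    (hmul : ∀ x y : G ⧸ H, 𝒜 x * 𝒜 y ≤ 𝒜 (x * y))
    (hσ : ∀ u : ↥P, ((σ u : Aˣ) : A) ∈ 𝒜 ((u : G) : G ⧸ H))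
    (u : ↥P) {z : G ⧸ H} {a : A} (ha : a ∈ 𝒜 z) :
    Tmap (𝒪 := 𝒪) σ φ u a ∈ 𝒜 (zact φ z u) := by
  have h1 : ((σ u)⁻¹ : Aˣ) * a * (σ (φ u) : A) ∈ 𝒜 (((u : G) : G ⧸ H)⁻¹ * z * (((φ u : ↥P) : G) : G ⧸ H)) := by
    refine mulMemA hmul (mulMemA hmul ?_ ha) (hσ (φ u))
    have := hσ u⁻¹
    rw [map_inv] at this
    simpa using this
  exact h1
variable {𝒜 : G ⧸ H → Submodule 𝒪 A}

/-- component projection coming from an internal direct sum decomposition. -/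
noncomputable def piA (hdec : DirectSum.IsInternal 𝒜) (z : G ⧸ H) : A →ₗ[𝒪] A :=
  (𝒜 z).subtype ∘ₗ (DirectSum.component 𝒪 (G ⧸ H) (fun w => ↥(𝒜 w)) z) ∘ₗ
    (LinearEquiv.ofBijective (DirectSum.coeLinearMap 𝒜) hdec).symm.toLinearMap

lemma piA_mem (hdec : DirectSum.IsInternal 𝒜) (z : G ⧸ H) (a : A) :
    piA hdec z a ∈ 𝒜 z :=
  ((LinearEquiv.ofBijective (DirectSum.coeLinearMap 𝒜) hdec).symm a z).2

lemma piA_same (hdec : DirectSum.IsInternal 𝒜) {z : G ⧸ H} {a : A} (ha : a ∈ 𝒜 z) :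
    piA hdec z a = a := by
  have := hdec.ofBijective_coeLinearMap_of_mem ha
  simp only [piA, LinearMap.coe_comp, Function.comp_apply, LinearEquiv.coe_coe]
  erw [this]
  rfl

lemma piA_ne (hdec : DirectSum.IsInternal 𝒜) {w z : G ⧸ H} (h : w ≠ z) {a : A}
    (ha : a ∈ 𝒜 w) : piA hdec z a = 0 := by
  have := hdec.ofBijective_coeLinearMap_of_mem_ne h ha
  simp only [piA, LinearMap.coe_comp, Function.comp_apply, LinearEquiv.coe_coe]
  erw [this]
  rfl

lemma sum_piA (hdec : DirectSum.IsInternal 𝒜) (a : A) :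
    ∑ᶠ z : G ⧸ H, piA hdec z a = a := by
  have : Fintype (G ⧸ H) := Fintype.ofFinite _
  rw [finsum_eq_sum_of_fintype]
  set e := LinearEquiv.ofBijective (DirectSum.coeLinearMap 𝒜) hdec with he
  have h1 : a = e (e.symm a) := (e.apply_symm_apply a).symm
  have h2 : e.symm a = ∑ z, DirectSum.of (fun w => ↥(𝒜 w)) z (e.symm a z) :=
    (DirectSum.sum_univ_of _).symm
  calc ∑ z, piA hdec z a = ∑ z, (DirectSum.coeLinearMap 𝒜) (DirectSum.of (fun w => ↥(𝒜 w)) z (e.symm a z)) := by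
        refine Finset.sum_congr rfl fun z _ => ?_
        rw [DirectSum.coeLinearMap_of]; rfl
    _ = (DirectSum.coeLinearMap 𝒜) (∑ z, DirectSum.of (fun w => ↥(𝒜 w)) z (e.symm a z)) := (map_sum _ _ _).symm
    _ = e (e.symm a) := by rw [← h2]; rfl
    _ = a := e.apply_symm_apply a

lemma Tmap_S {a : A} (ha : a ∈ intFixed 𝒪 σ φ ⊤) (u : ↥P) :
    Tmap (𝒪 := 𝒪) σ φ u a = a :=
  (mem_intFixed_iff σ φ).mp ha u trivial

lemma piA_T (hdec : DirectSum.IsInternal 𝒜)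
    (hmul : ∀ x y : G ⧸ H, 𝒜 x * 𝒜 y ≤ 𝒜 (x * y))
    (hσ : ∀ u : ↥P, ((σ u : Aˣ) : A) ∈ 𝒜 ((u : G) : G ⧸ H))
    (u : ↥P) (z : G ⧸ H) (a : A) :
    Tmap (𝒪 := 𝒪) σ φ u (piA hdec z a) =
      piA hdec (zact φ z u) (Tmap (𝒪 := 𝒪) σ φ u a) := by
  haveI : Fintype (G ⧸ H) := Fintype.ofFinite _
  conv_rhs => rw [← sum_piA hdec a]
  rw [finsum_eq_sum_of_fintype, map_sum, map_sum]
  rw [Finset.sum_eq_single z]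
  · exact (piA_same hdec (Tmap_mem σ φ hmul hσ u (piA_mem hdec z a))).symm
  · intro w _ hwz
    exact piA_ne hdec (fun h => hwz (zact_injective φ u h)) (Tmap_mem σ φ hmul hσ u (piA_mem hdec w a))
  · intro h; exact absurd (Finset.mem_univ z) h

/-- stabilizer of `z` under the `zact` action. -/
def zstab (z : G ⧸ H) : Subgroup P where
  carrier := {u | zact φ z u = z}
  one_mem' := zact_one φ z
  mul_mem' := by
    intro u v hu hv
    show zact φ z (u * v) = z
    rw [← zact_mul, hu, hv]
  inv_mem' := by
    intro u hu
    show zact φ z u⁻¹ = z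
    conv_lhs => rw [← hu]
    rw [zact_mul, mul_inv_cancel, zact_one]

lemma mem_zstab {z : G ⧸ H} {u : ↥P} : u ∈ zstab φ z ↔ zact φ z u = z := Iff.rfl

lemma good_zact {z : G ⧸ H} {u : ↥P} (h : ∀ w, zact φ (zact φ z u) w = zact φ z u) :
    ∀ v, zact φ z v = z := by
  intro v
  have e1 : zact φ (zact φ z u) u⁻¹ = z := by rw [zact_mul, mul_inv_cancel, zact_one]
  conv_lhs => rw [← e1]
  rw [zact_mul]
  have e2 : u⁻¹ * v = (u⁻¹ * v * u) * u⁻¹ := by group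
  rw [e2, ← zact_mul, h (u⁻¹ * v * u), e1]

lemma piA_fix_stab (hdec : DirectSum.IsInternal 𝒜)
    (hmul : ∀ x y : G ⧸ H, 𝒜 x * 𝒜 y ≤ 𝒜 (x * y))
    (hσ : ∀ u : ↥P, ((σ u : Aˣ) : A) ∈ 𝒜 ((u : G) : G ⧸ H))
    {a : A} (ha : a ∈ intFixed 𝒪 σ φ ⊤) {z : G ⧸ H} {v : ↥P} (hv : v ∈ zstab φ z) :
    Tmap (𝒪 := 𝒪) σ φ v (piA hdec z a) = piA hdec z a := by
  rw [piA_T σ φ hdec hmul hσ, Tmap_S σ φ ha, show zact φ z v = z from hv]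

lemma relTr_stab [Fintype (G ⧸ H)] (hdec : DirectSum.IsInternal 𝒜)
    (hmul : ∀ x y : G ⧸ H, 𝒜 x * 𝒜 y ≤ 𝒜 (x * y))
    (hσ : ∀ u : ↥P, ((σ u : Aˣ) : A) ∈ 𝒜 ((u : G) : G ⧸ H))
    {a : A} (ha : a ∈ intFixed 𝒪 σ φ ⊤) (z : G ⧸ H) :
    relTr σ φ (zstab φ z) (piA hdec z a) =
      ∑ w ∈ Finset.univ.filter (fun w => ∃ u, zact φ z u = w), piA hdec w a := by
  haveI : Fintype (Quotient (QuotientGroup.rightRel (zstab φ z))) := Fintype.ofFinite _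
  have h0 : relTr σ φ (zstab φ z) (piA hdec z a) =
      ∑ x : Quotient (QuotientGroup.rightRel (zstab φ z)),
        Tmap (𝒪 := 𝒪) σ φ x.out (piA hdec z a) := by
    rw [relTr, finsum_eq_sum_of_fintype]; rfl
  rw [h0]
  have hterm : ∀ x : Quotient (QuotientGroup.rightRel (zstab φ z)),
      Tmap (𝒪 := 𝒪) σ φ x.out (piA hdec z a) = piA hdec (zact φ z x.out) a := by
    intro x
    rw [piA_T σ φ hdec hmul hσ, Tmap_S σ φ ha]
  refine Finset.sum_bij (fun x _ => zact φ z x.out) ?_ ?_ ?_ ?_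
  · intro x _
    exact Finset.mem_filter.mpr ⟨Finset.mem_univ _, ⟨x.out, rfl⟩⟩
  · intro x hx y hy hxy
    have hxy' : zact φ z x.out = zact φ z y.out := hxy
    have hq : (y.out : ↥P) * x.out⁻¹ ∈ zstab φ z := by
      rw [mem_zstab, ← zact_mul, ← hxy', zact_mul, mul_inv_cancel, zact_one]
    have hrel : (QuotientGroup.rightRel (zstab φ z)) x.out y.out :=
      (QuotientGroup.rightRel_apply).mpr hq
    calc x = Quotient.mk _ x.out := (Quotient.out_eq x).symm
      _ = Quotient.mk _ y.out := Quotient.sound hrel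
      _ = y := Quotient.out_eq y
  · intro w hw
    obtain ⟨u, hu⟩ := (Finset.mem_filter.mp hw).2
    refine ⟨Quotient.mk _ u, Finset.mem_univ _, ?_⟩
    show zact φ z (Quotient.mk _ u : Quotient (QuotientGroup.rightRel (zstab φ z))).out = w
    set x0 := (Quotient.mk _ u : Quotient (QuotientGroup.rightRel (zstab φ z))).out with hx0
    have hq : u * x0⁻¹ ∈ zstab φ z :=
      (QuotientGroup.rightRel_apply).mp (Quotient.mk_out u)
    have e : x0 = (u * x0⁻¹)⁻¹ * u := by group
    conv_lhs => rw [e]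
    rw [← zact_mul, show zact φ z (u * x0⁻¹)⁻¹ = z from (zstab φ z).inv_mem hq, hu]
  · intro x _
    exact hterm x

lemma badsum [Fintype (G ⧸ H)] (hdec : DirectSum.IsInternal 𝒜)
    (hmul : ∀ x y : G ⧸ H, 𝒜 x * 𝒜 y ≤ 𝒜 (x * y))
    (hσ : ∀ u : ↥P, ((σ u : Aˣ) : A) ∈ 𝒜 ((u : G) : G ⧸ H))
    {a : A} (ha : a ∈ intFixed 𝒪 σ φ ⊤) :
    ∀ (n : ℕ) (F : Finset (G ⧸ H)), F.card ≤ n →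
      (∀ z ∈ F, ∀ u, zact φ z u ∈ F) → (∀ z ∈ F, ¬ (∀ u, zact φ z u = z)) →
      ∑ w ∈ F, piA hdec w a ∈ trSum 𝒪 σ φ := by
  intro n
  induction n with
  | zero =>
    intro F hF _ _
    rw [Finset.card_eq_zero.mp (Nat.le_zero.mp hF)]
    simpa using zero_mem _
  | succ n ih =>
    intro F hcard hinv hbad
    rcases F.eq_empty_or_nonempty with rfl | ⟨z₀, hz₀⟩
    · simpa using zero_mem _
    · set Orb := Finset.univ.filter (fun w => ∃ u, zact φ z₀ u = w) with hOrb
      have hOrbF : Orb ⊆ F := by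
        intro w hw
        obtain ⟨u, hu⟩ := (Finset.mem_filter.mp hw).2
        rw [← hu]; exact hinv z₀ hz₀ u
      have hz₀Orb : z₀ ∈ Orb :=
        Finset.mem_filter.mpr ⟨Finset.mem_univ _, ⟨1, zact_one φ z₀⟩⟩
      have hsum := Finset.sum_sdiff (f := fun w => piA hdec w a) hOrbF
      rw [← hsum]
      refine add_mem ?_ ?_
      · refine ih (F \ Orb) ?_ ?_ ?_
        · have h1 : F \ Orb ⊆ F.erase z₀ := by
            intro w hw
            rcases Finset.mem_sdiff.mp hw with ⟨hwF, hwO⟩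
            refine Finset.mem_erase.mpr ⟨?_, hwF⟩
            rintro rfl; exact hwO hz₀Orb
          have h2 := Finset.card_le_card h1
          have h3 : (F.erase z₀).card = F.card - 1 := Finset.card_erase_of_mem hz₀
          omega
        · intro z hz u
          rcases Finset.mem_sdiff.mp hz with ⟨hzF, hzO⟩
          refine Finset.mem_sdiff.mpr ⟨hinv z hzF u, ?_⟩
          intro hmem
          apply hzO
          obtain ⟨v, hv⟩ := (Finset.mem_filter.mp hmem).2
          refine Finset.mem_filter.mpr ⟨Finset.mem_univ _, ⟨v * u⁻¹, ?_⟩⟩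
          rw [← zact_mul, hv, zact_mul, mul_inv_cancel, zact_one]
        · intro z hz
          exact hbad z (Finset.mem_sdiff.mp hz).1
      · rw [← relTr_stab σ φ hdec hmul hσ ha z₀]
        have hlt : zstab φ z₀ < ⊤ := by
          rw [lt_top_iff_ne_top]
          intro htop
          refine hbad z₀ hz₀ fun u => ?_
          have : u ∈ zstab φ z₀ := htop ▸ Subgroup.mem_top u
          exact this
        have hfix : piA hdec z₀ a ∈ intFixed 𝒪 σ φ (zstab φ z₀) := by
          rw [mem_intFixed_iff]
          intro v hv
          exact piA_fix_stab σ φ hdec hmul hσ ha hv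
        refine Submodule.mem_iSup_of_mem ⟨zstab φ z₀, hlt⟩ ?_
        exact Submodule.subset_span ⟨piA hdec z₀ a, hfix, rfl⟩

/-- decomposition of a fixed element: the non-good part lies in `trSum`. -/
lemma good_decomp [Fintype (G ⧸ H)] (hdec : DirectSum.IsInternal 𝒜)
    (hmul : ∀ x y : G ⧸ H, 𝒜 x * 𝒜 y ≤ 𝒜 (x * y))
    (hσ : ∀ u : ↥P, ((σ u : Aˣ) : A) ∈ 𝒜 ((u : G) : G ⧸ H))
    {a : A} (ha : a ∈ intFixed 𝒪 σ φ ⊤) :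
    a - ∑ z ∈ Finset.univ.filter (fun z => ∀ u, zact φ z u = z), piA hdec z a
      ∈ trSum 𝒪 σ φ := by
  have hall : ∑ z, piA hdec z a = a := by
    rw [← finsum_eq_sum_of_fintype]
    exact sum_piA hdec a
  have hsplit := Finset.sum_filter_add_sum_filter_not Finset.univ
    (fun z => ∀ u, zact φ z u = z) (fun z => piA hdec z a)
  have : a - ∑ z ∈ Finset.univ.filter (fun z => ∀ u, zact φ z u = z), piA hdec z a
      = ∑ z ∈ Finset.univ.filter (fun z => ¬ ∀ u, zact φ z u = z), piA hdec z a := by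
    rw [sub_eq_iff_eq_add']
    rw [← hsplit] at hall
    exact hall.symm
  rw [this]
  refine badsum σ φ hdec hmul hσ ha (Finset.univ.filter
      (fun z => ¬ ∀ u, zact φ z u = z)).card _ le_rfl ?_ ?_
  · intro z hz u
    refine Finset.mem_filter.mpr ⟨Finset.mem_univ _, ?_⟩
    intro hgood
    exact (Finset.mem_filter.mp hz).2 (good_zact φ hgood)
  · intro z hz
    exact (Finset.mem_filter.mp hz).2

section GoodZ
variable (hdec : DirectSum.IsInternal 𝒜)
  (hmul : ∀ x y : G ⧸ H, 𝒜 x * 𝒜 y ≤ 𝒜 (x * y))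
  (hσ : ∀ u : ↥P, ((σ u : Aˣ) : A) ∈ 𝒜 ((u : G) : G ⧸ H))
  {z : G ⧸ H} (hz : ∀ u, zact φ z u = z)

include hdec hmul hσ hz

lemma piA_good_T (u : ↥P) (c : A) :
    Tmap (𝒪 := 𝒪) σ φ u (piA hdec z c) = piA hdec z (Tmap (𝒪 := 𝒪) σ φ u c) := by
  rw [piA_T σ φ hdec hmul hσ, hz u]

lemma piA_good_S {a : A} (ha : a ∈ intFixed 𝒪 σ φ ⊤) :
    piA hdec z a ∈ intFixed 𝒪 σ φ ⊤ := by
  rw [mem_intFixed_iff]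
  intro u _
  rw [piA_good_T σ φ hdec hmul hσ hz, Tmap_S σ φ ha]

lemma piA_good_intFixed {Q : Subgroup P} {c : A} (hc : c ∈ intFixed 𝒪 σ φ Q) :
    piA hdec z c ∈ intFixed 𝒪 σ φ Q := by
  rw [mem_intFixed_iff]
  intro u hu
  rw [piA_good_T σ φ hdec hmul hσ hz, (mem_intFixed_iff σ φ).mp hc u hu]

lemma piA_good_relTr (Q : Subgroup P) (c : A) :
    piA hdec z (relTr σ φ Q c) = relTr σ φ Q (piA hdec z c) := by
  haveI : Fintype (Quotient (QuotientGroup.rightRel Q)) := Fintype.ofFinite _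
  have h0 : ∀ d : A, relTr σ φ Q d = ∑ x : Quotient (QuotientGroup.rightRel Q),
      Tmap (𝒪 := 𝒪) σ φ x.out d := by
    intro d; rw [relTr, finsum_eq_sum_of_fintype]; rfl
  rw [h0, h0, map_sum]
  exact Finset.sum_congr rfl fun x _ => (piA_good_T σ φ hdec hmul hσ hz x.out _).symm

lemma piA_good_trSum {x : A} (hx : x ∈ trSum 𝒪 σ φ) :
    piA hdec z x ∈ trSum 𝒪 σ φ := by
  have hle : Submodule.map (piA hdec z) (trSum 𝒪 σ φ) ≤ trSum 𝒪 σ φ := by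
    rw [trSum, Submodule.map_iSup]
    refine iSup_le fun Q => ?_
    rw [Submodule.map_span]
    refine le_trans (Submodule.span_mono ?_)
      (le_iSup (fun Q : {Q : Subgroup P // Q < ⊤} =>
        Submodule.span 𝒪 (relTr σ φ Q '' (intFixed 𝒪 σ φ Q))) Q)
    rintro y ⟨-, ⟨c, hc, rfl⟩, rfl⟩
    exact ⟨piA hdec z c, piA_good_intFixed σ φ hdec hmul hσ hz hc,
      (piA_good_relTr σ φ hdec hmul hσ hz Q c).symm⟩
  exact hle ⟨x, hx, rfl⟩

lemma piA_good_smul {𝔭 : Ideal 𝒪} {x : A} (hx : x ∈ 𝔭 • intFixed 𝒪 σ φ ⊤) :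
    piA hdec z x ∈ 𝔭 • intFixed 𝒪 σ φ ⊤ := by
  refine Submodule.smul_induction_on hx ?_ ?_
  · intro r hr s hs
    rw [map_smul]
    exact Submodule.smul_mem_smul hr (piA_good_S σ φ hdec hmul hσ hz hs)
  · intro x y hx hy
    rw [map_add]; exact add_mem hx hy

lemma piA_good_brDen {𝔭 : Ideal 𝒪} {x : A} (hx : x ∈ brDen 𝒪 𝔭 σ φ) :
    piA hdec z x ∈ brDen 𝒪 𝔭 σ φ := by
  rcases Submodule.mem_sup.mp hx with ⟨t, ht, s, hs, rfl⟩
  rw [map_add]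
  exact Submodule.add_mem_sup (piA_good_trSum σ φ hdec hmul hσ hz ht)
    (piA_good_smul σ φ hdec hmul hσ hz hs)

end GoodZ

lemma cond_iff_good {z : G ⧸ H} :
    (∀ u : ↥P, (((φ u : ↥P) : G) : G ⧸ H) = z⁻¹ * ((u : G) : G ⧸ H) * z) ↔
      (∀ u, zact φ z u = z) := by
  refine forall_congr' fun u => ?_
  rw [zact]
  constructor
  · intro h; rw [h]; group
  · intro h
    rw [mul_assoc, inv_mul_eq_iff_eq_mul] at h
    rw [mul_assoc, ← h, inv_mul_cancel_left]

section Quot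
variable (𝔭 : Ideal 𝒪) (hdec : DirectSum.IsInternal 𝒜)
  (hmul : ∀ x y : G ⧸ H, 𝒜 x * 𝒜 y ≤ 𝒜 (x * y))
  (hσ : ∀ u : ↥P, ((σ u : Aˣ) : A) ∈ 𝒜 ((u : G) : G ⧸ H))

/-- the induced projection on the Brauer-type quotient, for a good `z`. -/
noncomputable def piQ {z : G ⧸ H} (hz : ∀ u, zact φ z u = z) :
    (↥(intFixed 𝒪 σ φ ⊤) ⧸ (brDen 𝒪 𝔭 σ φ).comap (intFixed 𝒪 σ φ ⊤).subtype) →ₗ[𝒪]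
    (↥(intFixed 𝒪 σ φ ⊤) ⧸ (brDen 𝒪 𝔭 σ φ).comap (intFixed 𝒪 σ φ ⊤).subtype) :=
  Submodule.liftQ _
    (((brDen 𝒪 𝔭 σ φ).comap (intFixed 𝒪 σ φ ⊤).subtype).mkQ ∘ₗ
      ((piA hdec z).restrict (fun x hx => piA_good_S σ φ hdec hmul hσ hz hx)))
    (by
      intro x hx
      rw [LinearMap.mem_ker, LinearMap.comp_apply, Submodule.mkQ_apply,
        Submodule.Quotient.mk_eq_zero]
      exact piA_good_brDen σ φ hdec hmul hσ hz hx)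

lemma piQ_mk {z : G ⧸ H} (hz : ∀ u, zact φ z u = z) (y : ↥(intFixed 𝒪 σ φ ⊤)) :
    piQ σ φ 𝔭 hdec hmul hσ hz
        (((brDen 𝒪 𝔭 σ φ).comap (intFixed 𝒪 σ φ ⊤).subtype).mkQ y) =
      ((brDen 𝒪 𝔭 σ φ).comap (intFixed 𝒪 σ φ ⊤).subtype).mkQ
        ⟨piA hdec z y.1, piA_good_S σ φ hdec hmul hσ hz y.2⟩ := rfl

include hdec hmul hσ in
lemma internal_good :
    DirectSum.IsInternal (fun z : {z : G ⧸ H //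
        ∀ u : ↥P, (((φ u : ↥P) : G) : G ⧸ H) = z⁻¹ * ((u : G) : G ⧸ H) * z} =>
      Submodule.map ((brDen 𝒪 𝔭 σ φ).comap (intFixed 𝒪 σ φ ⊤).subtype).mkQ
        ((𝒜 z.1).comap (intFixed 𝒪 σ φ ⊤).subtype)) := by
  haveI : Fintype (G ⧸ H) := Fintype.ofFinite _
  rw [DirectSum.isInternal_submodule_iff_iSupIndep_and_iSup_eq_top]
  constructor
  · intro z
    have hz : ∀ u, zact φ z.1 u = z.1 := (cond_iff_good φ).mp z.2
    refine Submodule.disjoint_def.mpr fun x hx1 hx2 => ?_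
    obtain ⟨y, hy, rfl⟩ := Submodule.mem_map.mp hx1
    have he : piQ σ φ 𝔭 hdec hmul hσ hz
        (((brDen 𝒪 𝔭 σ φ).comap (intFixed 𝒪 σ φ ⊤).subtype).mkQ y) =
        ((brDen 𝒪 𝔭 σ φ).comap (intFixed 𝒪 σ φ ⊤).subtype).mkQ y := by
      rw [piQ_mk]
      congr 1
      exact Subtype.ext (piA_same hdec hy)
    rw [← he]
    have hker : (⨆ w, ⨆ (_ : w ≠ z),
        Submodule.map ((brDen 𝒪 𝔭 σ φ).comap (intFixed 𝒪 σ φ ⊤).subtype).mkQ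
          ((𝒜 w.1).comap (intFixed 𝒪 σ φ ⊤).subtype)) ≤
        LinearMap.ker (piQ σ φ 𝔭 hdec hmul hσ hz) := by
      refine iSup_le fun w => iSup_le fun hwz => ?_
      rintro _ ⟨y', hy', rfl⟩
      rw [LinearMap.mem_ker, piQ_mk]
      have h0 : piA hdec z.1 (y' : A) = 0 :=
        piA_ne hdec (fun h => hwz (Subtype.ext h)) hy'
      have : (⟨piA hdec z.1 (y' : A), piA_good_S σ φ hdec hmul hσ hz y'.2⟩ :
          ↥(intFixed 𝒪 σ φ ⊤)) = 0 := Subtype.ext h0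
      rw [this, map_zero]
    rw [LinearMap.mem_ker.mp (hker hx2)]
  · rw [eq_top_iff]
    rintro x -
    obtain ⟨y, rfl⟩ := Submodule.mkQ_surjective _ x
    set g := Finset.univ.filter (fun z : G ⧸ H => ∀ u, zact φ z u = z) with hg
    have hgood : ∀ z ∈ g, ∀ u, zact φ z u = z := fun z hz => (Finset.mem_filter.mp hz).2
    set t : ↥(intFixed 𝒪 σ φ ⊤) :=
      ⟨∑ z ∈ g, piA hdec z y.1,
        sum_mem fun z hz => piA_good_S σ φ hdec hmul hσ (hgood z hz) y.2⟩ with ht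
    have hyt : ((brDen 𝒪 𝔭 σ φ).comap (intFixed 𝒪 σ φ ⊤).subtype).mkQ y =
        ((brDen 𝒪 𝔭 σ φ).comap (intFixed 𝒪 σ φ ⊤).subtype).mkQ t := by
      simp only [Submodule.mkQ_apply]
      rw [Submodule.Quotient.eq]
      refine Submodule.mem_comap.mpr ?_
      have : ((y - t : ↥(intFixed 𝒪 σ φ ⊤)) : A) = y.1 - ∑ z ∈ g, piA hdec z y.1 := rfl
      rw [Submodule.coe_subtype, this]
      exact le_sup_left (a := trSum 𝒪 σ φ)
        (good_decomp σ φ hdec hmul hσ y.2)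
    rw [hyt]
    have htsum : t = ∑ z ∈ g.attach,
        (⟨piA hdec z.1 y.1, piA_good_S σ φ hdec hmul hσ (hgood z.1 z.2) y.2⟩ :
          ↥(intFixed 𝒪 σ φ ⊤)) := by
      refine Subtype.ext ?_
      rw [ht]
      push_cast
      rw [← Finset.sum_attach g (fun z => piA hdec z y.1)]
    rw [htsum, map_sum]
    refine sum_mem fun z hz => ?_
    refine Submodule.mem_iSup_of_mem
      ⟨z.1, (cond_iff_good φ).mpr (hgood z.1 z.2)⟩ ?_
    exact Submodule.mem_map.mpr ⟨_, Submodule.mem_comap.mpr (piA_mem hdec z.1 y.1), rfl⟩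

end Quot
end Work

/-- With `A = B ⊗_{𝒪H} 𝒪G` the induced `G`-interior `Ḡ`-graded algebra
(modelled as in Statement 6; the `z̄`-component `B⊗z` is `𝒜 z̄`), `K := Aut_Ḡ(P)` and
`K₁ := Aut_1̄(P)`:
(i) `A(Δ_φ(P)) = 0` for `φ ∈ Aut(P) \ K` (so `N̄_A^{Aut(P)}(P) = N̄_A^K(P)`);
(ii) for `φ ∈ K`, `A(Δ_φ(P)) = ⊕_{z̄} (B⊗z)(Δ_φ(P))`, the sum over the `z̄ ∈ Ḡ` with
`(φ(u))‾ = (z⁻¹uz)‾` for all `u`, where `(B⊗z)(Δ_φ(P))` is the image of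
`(B⊗z) ∩ A^{Δ_φ(P)}` in `A(Δ_φ(P))`; moreover the resulting `U/U'`-grading of `N̄^K_A(P)`
(the `g̃`-component being the sum of the `(B⊗z)(Δ_φ(P))` over the pairs `(φ,z̄)` with
`z̄ ∈ g̃`) is multiplicative: degrees compose, and the product of the `(φ,z̄)`-component and
the `(ψ,w̄)`-component lies in the `(ψ∘φ, z̄w̄)`-component;
(iii) the identity component `N̄^K_A(P)_{1̃}` is `⊕_{φ∈K₁} ⊕_{g'H∈U'/H} (B⊗g')(Δ_φ(P))`:
a pair `(φ,z̄)` as in (ii) has `z̄ ∈ U'/H` exactly when `φ ∈ K₁`. -/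
theorem stmt10
    (𝒪 : Type*) [CommRing 𝒪] [IsDomain 𝒪] [IsDiscreteValuationRing 𝒪]
    [IsAdicComplete (IsLocalRing.maximalIdeal 𝒪) 𝒪]
    (p : ℕ) [Fact p.Prime] [CharP (IsLocalRing.ResidueField 𝒪) p]
    (G : Type*) [Group G] [Finite G] (H P : Subgroup G) [H.Normal] (hP : IsPGroup p ↥P)
    (A : Type*) [Ring A] [Algebra 𝒪 A] (σG : G →* Aˣ)
    (𝒜 : G ⧸ H → Submodule 𝒪 A)
    (hmul : ∀ x y : G ⧸ H, 𝒜 x * 𝒜 y ≤ 𝒜 (x * y))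
    (hone : (1 : A) ∈ 𝒜 1)
    (hσ : ∀ g : G, ((σG g : Aˣ) : A) ∈ 𝒜 ↑g)
    (hdec : DirectSum.IsInternal 𝒜) :
    -- (i) the components of `N̄_A^{Aut(P)}(P)` outside `K = Aut_Ḡ(P)` vanish:
    (∀ φ : MulAut ↥P, φ ∉ AutBar H P →
      intFixed 𝒪 (σG.comp P.subtype) φ ⊤ ≤
        brDen 𝒪 (IsLocalRing.maximalIdeal 𝒪) (σG.comp P.subtype) φ) ∧
    -- (ii) `A(Δ_φ(P)) = ⊕_{z̄} (B⊗z)(Δ_φ(P))` for `φ ∈ K`: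
    (∀ φ : MulAut ↥P, φ ∈ AutBar H P →
      DirectSum.IsInternal fun z :
          {z : G ⧸ H // ∀ u : ↥P, (((φ u : ↥P) : G) : G ⧸ H) = (↑z)⁻¹ * ↑(↑u : G) * ↑z} =>
        Submodule.map
          ((brDen 𝒪 (IsLocalRing.maximalIdeal 𝒪) (σG.comp P.subtype) φ).comap
            (intFixed 𝒪 (σG.comp P.subtype) φ ⊤).subtype).mkQ
          ((𝒜 ↑z).comap (intFixed 𝒪 (σG.comp P.subtype) φ ⊤).subtype)) ∧
    -- ... and the `U/U'`-grading is multiplicative: degrees compose,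
    (∀ (φ ψ : MulAut ↥P) (z w : G ⧸ H),
      (∀ u : ↥P, (((φ u : ↥P) : G) : G ⧸ H) = z⁻¹ * ↑(↑u : G) * z) →
      (∀ u : ↥P, (((ψ u : ↥P) : G) : G ⧸ H) = w⁻¹ * ↑(↑u : G) * w) →
      (∀ u : ↥P, (((φ.trans ψ u : ↥P) : G) : G ⧸ H) = (z * w)⁻¹ * ↑(↑u : G) * (z * w)) ∧
      -- and the `(φ,z̄)`-component times the `(ψ,w̄)`-component lies in the
      -- `(ψ∘φ, z̄w̄)`-component:
      (𝒜 z ⊓ intFixed 𝒪 (σG.comp P.subtype) φ ⊤) *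
          (𝒜 w ⊓ intFixed 𝒪 (σG.comp P.subtype) ψ ⊤) ≤
        𝒜 (z * w) ⊓ intFixed 𝒪 (σG.comp P.subtype) (φ.trans ψ) ⊤) ∧
    -- (iii) a pair `(φ,z̄)` contributes to the identity component (`z̄ ∈ U'/H`)
    -- exactly when `φ ∈ K₁`:
    (∀ (φ : MulAut ↥P) (z : G ⧸ H), φ ∈ AutBar H P →
      (∀ u : ↥P, (((φ u : ↥P) : G) : G ⧸ H) = z⁻¹ * ↑(↑u : G) * z) →
      (φ ∈ AutOne H P ↔ ∃ g' : G, g' ∈ Uprime H P ∧ (↑g' : G ⧸ H) = z)) := by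
  classical
  haveI : Fintype (G ⧸ H) := Fintype.ofFinite _
  set σ' : ↥P →* Aˣ := σG.comp P.subtype with hσ'def
  have hσ' : ∀ u : ↥P, ((σ' u : Aˣ) : A) ∈ 𝒜 ((u : G) : G ⧸ H) := fun u => hσ (u : G)
  refine ⟨?_, ?_, ?_, ?_⟩
  · -- (i)
    intro φ hφ a ha
    have hempty : (Finset.univ.filter (fun z : G ⧸ H => ∀ u, zact φ z u = z)) = ∅ := by
      rw [Finset.filter_eq_empty_iff]
      intro z _ hz
      obtain ⟨g, rfl⟩ := QuotientGroup.mk_surjective z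
      refine hφ ⟨g, fun u => ?_⟩
      have h1 := (cond_iff_good φ).mpr hz u
      rw [h1]
      simp [QuotientGroup.mk_mul, QuotientGroup.mk_inv]
    have hd := good_decomp σ' φ hdec hmul hσ' ha
    rw [hempty, Finset.sum_empty, sub_zero] at hd
    exact Submodule.mem_sup_left hd
  · -- (ii), internal direct sum
    intro φ _
    exact internal_good σ' φ (IsLocalRing.maximalIdeal 𝒪) hdec hmul hσ'
  · -- (ii), multiplicativity
    intro φ ψ z w hφz hψw
    constructor
    · intro u
      have h1 : ((ψ (φ u) : ↥P) : G) = ((φ.trans ψ) u : ↥P) := rfl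
      rw [← h1, hψw (φ u), hφz u, mul_inv_rev]
      group
    · rw [Submodule.mul_le]
      rintro a ⟨ha1, ha2⟩ b ⟨hb1, hb2⟩
      refine ⟨mulMemA hmul ha1 hb1, ?_⟩
      intro u _
      have e1 : (σ' u : A) * a = a * (σ' (φ u) : A) := ha2 u trivial
      have e2 : (σ' (φ u) : A) * b = b * (σ' (ψ (φ u)) : A) := hb2 (φ u) trivial
      calc (σ' u : A) * (a * b) = ((σ' u : A) * a) * b := (mul_assoc _ _ _).symm
        _ = (a * (σ' (φ u) : A)) * b := by rw [e1]
        _ = a * ((σ' (φ u) : A) * b) := mul_assoc _ _ _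
        _ = a * (b * (σ' (ψ (φ u)) : A)) := by rw [e2]
        _ = (a * b) * (σ' ((φ.trans ψ) u) : A) := (mul_assoc _ _ _).symm
  · -- (iii)
    intro φ z _ hz
    constructor
    · intro hone
      obtain ⟨g', rfl⟩ := QuotientGroup.mk_surjective z
      refine ⟨g', fun u => ?_, rfl⟩
      have h := (hone u).symm.trans (hz u)
      rw [mul_assoc] at h
      exact (eq_inv_mul_iff_mul_eq).mp h
    · rintro ⟨g', hg', rfl⟩ u
      have hc : ((g' : G) : G ⧸ H) * ((u : G) : G ⧸ H) =
          ((u : G) : G ⧸ H) * ((g' : G) : G ⧸ H) := hg' u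
      rw [hz u, mul_assoc, ← hc, inv_mul_cancel_left]
end
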